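/- arXiv:1506.02577 — 4 statements merged into one kernel-verified Lean document; each statement's English description precedes it below -/
import Mathlib

section
/- Let φ : [0,∞) → [0,∞) be increasing and subadditive with φ(0) = 0 and linear growth with constant ν > 0, i.e. φ(x) ≤ ν(x + 1) for all x ≥ 0. Then for every k ≥ 2ν and every x ≥ 0 one has φ(x) ≤ kx + φ(2ν/k). In particular, for every μ > 0, y ∈ ℝ, z ∈ ℝ^d and k ≥ 2ν: μ|y| + φ(‖z‖) ≤ μ|y| + k‖z‖ + φ(2ν/k). -/
/-!
Cover `[0, x]` by `⌈x / h⌉` steps of length `h := 2ν/k`: monotonicity and subadditivity give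
`φ x ≤ ⌈x / h⌉ φ h ≤ (x / h + 1) φ h`. The choice of `h` makes `h ≤ 1`, so linear growth gives
`φ h ≤ 2ν = k h`, and the bound becomes `k x + φ h`.
-/

section SubadditiveMonotone

variable {φ : ℝ → ℝ}

theorem apply_natCast_mul_le_of_subadditive
    (hφ_subadd : ∀ a b, 0 ≤ a → 0 ≤ b → φ (a + b) ≤ φ a + φ b) (hφ0 : φ 0 = 0)
    {h : ℝ} (hh : 0 ≤ h) (n : ℕ) :
    φ (n * h) ≤ n * φ h := by
  induction n with
  | zero => simp [hφ0]
  | succ n ih =>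
    calc φ ((n + 1 : ℕ) * h) = φ (n * h + h) := by push_cast; ring_nf
      _ ≤ φ (n * h) + φ h := hφ_subadd _ _ (by positivity) hh
      _ ≤ (n + 1 : ℕ) * φ h := by push_cast; linarith

theorem apply_le_div_add_one_mul_of_subadditive
    (hφ_subadd : ∀ a b, 0 ≤ a → 0 ≤ b → φ (a + b) ≤ φ a + φ b) (hφ0 : φ 0 = 0)
    (hφ_mono : ∀ a b, 0 ≤ a → a ≤ b → φ a ≤ φ b) {h x : ℝ} (hh : 0 < h) (hx : 0 ≤ x) :
    φ x ≤ (x / h + 1) * φ h := by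
  set n := ⌈x / h⌉₊
  have hx_le : x ≤ n * h := (div_le_iff₀ hh).mp (Nat.le_ceil _)
  have hn_le : (n : ℝ) ≤ x / h + 1 := (Nat.ceil_lt_add_one (by positivity)).le
  have hφh : 0 ≤ φ h := hφ0 ▸ hφ_mono 0 h le_rfl hh.le
  calc φ x ≤ φ (n * h) := hφ_mono _ _ hx hx_le
    _ ≤ n * φ h := apply_natCast_mul_le_of_subadditive hφ_subadd hφ0 hh.le n
    _ ≤ (x / h + 1) * φ h := mul_le_mul_of_nonneg_right hn_le hφh

theorem apply_le_mul_add_of_apply_le_mul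
    (hφ_subadd : ∀ a b, 0 ≤ a → 0 ≤ b → φ (a + b) ≤ φ a + φ b) (hφ0 : φ 0 = 0)
    (hφ_mono : ∀ a b, 0 ≤ a → a ≤ b → φ a ≤ φ b) {h k x : ℝ} (hh : 0 < h) (hx : 0 ≤ x)
    (hφh : φ h ≤ k * h) : φ x ≤ k * x + φ h := by
  have hxh : 0 ≤ x / h := by positivity
  calc φ x ≤ (x / h + 1) * φ h :=
        apply_le_div_add_one_mul_of_subadditive hφ_subadd hφ0 hφ_mono hh hx
    _ = x / h * φ h + φ h := by ring
    _ ≤ x / h * (k * h) + φ h := by gcongr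
    _ = k * x + φ h := by field_simp

end SubadditiveMonotone

theorem apply_two_mul_div_le_of_linear_growth {φ : ℝ → ℝ} {ν k : ℝ} (hν : 0 < ν) (hk : 2 * ν ≤ k)
    (hφ_growth : ∀ x, 0 ≤ x → φ x ≤ ν * (x + 1)) :
    φ (2 * ν / k) ≤ k * (2 * ν / k) := by
  have hk0 : 0 < k := by linarith
  have h_le_one : 2 * ν / k ≤ 1 := (div_le_one hk0).mpr hk
  calc φ (2 * ν / k) ≤ ν * (2 * ν / k + 1) := hφ_growth _ (by positivity)
    _ ≤ ν * 2 := by gcongr; linarith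
    _ = k * (2 * ν / k) := by field_simp

theorem stmt_1_general (d : ℕ) (μ ν : ℝ) (hν : 0 < ν)
    (φ : ℝ → ℝ)
    (hφ_mono : ∀ a b, 0 ≤ a → a ≤ b → φ a ≤ φ b)
    (hφ_subadd : ∀ a b, 0 ≤ a → 0 ≤ b → φ (a + b) ≤ φ a + φ b)
    (hφ0 : φ 0 = 0)
    (hφ_growth : ∀ x, 0 ≤ x → φ x ≤ ν * (x + 1)) :
    (∀ k, 2 * ν ≤ k → ∀ x, 0 ≤ x → φ x ≤ k * x + φ (2 * ν / k)) ∧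
    (∀ k, 2 * ν ≤ k → ∀ (y : ℝ) (z : EuclideanSpace ℝ (Fin d)),
      μ * |y| + φ ‖z‖ ≤ μ * |y| + k * ‖z‖ + φ (2 * ν / k)) := by
  have key : ∀ k, 2 * ν ≤ k → ∀ x, 0 ≤ x → φ x ≤ k * x + φ (2 * ν / k) := fun k hk x hx =>
    apply_le_mul_add_of_apply_le_mul hφ_subadd hφ0 hφ_mono
      (div_pos (by linarith) (by linarith)) hx (apply_two_mul_div_le_of_linear_growth hν hk hφ_growth)
  refine ⟨key, fun k hk y z => ?_⟩
  linarith [key k hk ‖z‖ (norm_nonneg z)]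

/-- If `φ : [0,∞) → [0,∞)` is increasing and subadditive with `φ 0 = 0`
and linear growth `φ x ≤ ν (x + 1)`, then for every `k ≥ 2ν` and `x ≥ 0` one has
`φ x ≤ k x + φ (2ν/k)`; in particular
`μ|y| + φ ‖z‖ ≤ μ|y| + k ‖z‖ + φ (2ν/k)`. -/
theorem stmt_1 (d : ℕ) (hd : 1 ≤ d) (μ ν : ℝ) (hμ : 0 < μ) (hν : 0 < ν)
    (φ : ℝ → ℝ)
    (hφ_nonneg : ∀ x, 0 ≤ x → 0 ≤ φ x)
    (hφ_mono : ∀ a b, 0 ≤ a → a ≤ b → φ a ≤ φ b)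
    (hφ_subadd : ∀ a b, 0 ≤ a → 0 ≤ b → φ (a + b) ≤ φ a + φ b)
    (hφ0 : φ 0 = 0)
    (hφ_growth : ∀ x, 0 ≤ x → φ x ≤ ν * (x + 1)) :
    (∀ k, 2 * ν ≤ k → ∀ x, 0 ≤ x → φ x ≤ k * x + φ (2 * ν / k)) ∧
    (∀ k, 2 * ν ≤ k → ∀ (y : ℝ) (z : EuclideanSpace ℝ (Fin d)),
      μ * |y| + φ ‖z‖ ≤ μ * |y| + k * ‖z‖ + φ (2 * ν / k)) :=
  stmt_1_general d μ ν hν φ hφ_mono hφ_subadd hφ0 hφ_growth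
end

section
/- Let φ : [0,∞) → [0,∞) be continuous, increasing and subadditive with φ(0) = 0 and linear growth with constant ν > 0 (φ(x) ≤ ν(x+1) for all x ≥ 0), let μ > 0, and let g : ℝ × ℝ^d → ℝ satisfy |g(y₁, z₁) − g(y₂, z₂)| ≤ μ|y₁ − y₂| + φ(‖z₁ − z₂‖) for all (y₁, z₁), (y₂, z₂). For m > max(μ, ν) define the lower approximation g̲_m(y, z) := inf{ g(a, b) + m(|y − a| + ‖z − b‖) : (a, b) ∈ ℚ × ℚ^d }. Then for every m > max(μ, ν): (i) g̲_m(y, z) is finite (the infimum is > −∞) for every (y, z); (ii) g̲_m is Lipschitz: |g̲_m(y₁, z₁) − g̲_m(y₂, z₂)| ≤ m(|y₁ − y₂| + ‖z₁ − z₂‖); (iii) g̲_m(y, z) ≤ g(y, z); (iv) g̲_m(y, z) is nondecreasing in m; and (v) for every (y, z), g̲_m(y, z) → g(y, z) as m → ∞. -/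
/-- A vector in `ℝ^d` with the given rational coordinates. -/
noncomputable def ratVec (d : ℕ) (b : Fin d → ℚ) : EuclideanSpace ℝ (Fin d) :=
  WithLp.toLp 2 (fun i => (b i : ℝ))

/-- The set `{ g(a,b) + m (|y − a| + ‖z − b‖) : (a,b) ∈ ℚ × ℚ^d }` appearing in the
Lepeltier–San Martin approximations (2.1) and (2.2) of the paper. -/
def lowerApproxSet (d : ℕ) (g : ℝ → EuclideanSpace ℝ (Fin d) → ℝ) (m : ℝ)
    (y : ℝ) (z : EuclideanSpace ℝ (Fin d)) : Set ℝ :=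
  {r : ℝ | ∃ (a : ℚ) (b : Fin d → ℚ),
    r = g (a : ℝ) (ratVec d b) + m * (|y - (a : ℝ)| + ‖z - ratVec d b‖)}

/-- The Lepeltier–San Martin lower approximation `g̲_m` (equation (2.1) of the paper). -/
noncomputable def lowerApprox (d : ℕ) (g : ℝ → EuclideanSpace ℝ (Fin d) → ℝ) (m : ℝ)
    (y : ℝ) (z : EuclideanSpace ℝ (Fin d)) : ℝ :=
  sInf (lowerApproxSet d g m y z)

/-!
Every candidate value `g(a, b) + m (|y − a| + ‖z − b‖)` dominates `g(y, z) − c` as soon as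
`m ≥ μ` and `φ(t) ≤ c + m t` for all `t ≥ 0`. With `c = ν` this gives finiteness; with
`c = φ(δ)`, which is admissible once `m ≥ ν (1 + 1/δ)` by monotonicity and linear growth of `φ`,
it gives `g − φ(δ) ≤ g̲_m ≤ g` for large `m`, hence convergence since `φ(δ) → 0`. The bound
`g̲_m ≤ g` holds because `g` is continuous and the rational points are dense. Lipschitz continuity
and monotonicity in `m` hold term by term.
-/

open Filter Topology

lemma denseRange_ratVec (d : ℕ) : DenseRange (ratVec d) :=
  (PiLp.homeomorph 2 fun _ : Fin d => ℝ).symm.surjective.denseRange.comp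
    (DenseRange.piMap fun _ => Rat.denseRange_cast) (PiLp.continuous_toLp 2 _)

lemma exists_pos_lt_of_continuousWithinAt {φ : ℝ → ℝ}
    (hφ : ContinuousWithinAt φ (Set.Ici 0) 0) (hφ0 : φ 0 = 0) {ε : ℝ} (hε : 0 < ε) :
    ∃ δ, 0 < δ ∧ φ δ < ε := by
  have hlim : Tendsto φ (𝓝[>] 0) (𝓝 (φ 0)) := (hφ.mono Set.Ioi_subset_Ici_self).tendsto
  rw [hφ0] at hlim
  obtain ⟨δ, hδε, hδ⟩ := ((hlim.eventually (gt_mem_nhds hε)).and self_mem_nhdsWithin).exists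
  exact ⟨δ, hδ, hδε⟩

lemma le_add_mul_of_le_mul_add_one {φ : ℝ → ℝ} {ν m δ : ℝ} (hν : 0 ≤ ν) (hδ : 0 < δ)
    (hφ_mono : ∀ a b, 0 ≤ a → a ≤ b → φ a ≤ φ b) (hφ0 : φ 0 = 0)
    (hφ_growth : ∀ x, 0 ≤ x → φ x ≤ ν * (x + 1)) (hm : ν * (1 + 1 / δ) ≤ m)
    {t : ℝ} (ht : 0 ≤ t) :
    φ t ≤ φ δ + m * t := by
  have hm0 : 0 ≤ m := hm.trans' (by positivity)
  rcases le_or_gt t δ with htδ | hδt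
  · nlinarith [hφ_mono t δ ht htδ]
  · have hφδ : 0 ≤ φ δ := hφ0 ▸ hφ_mono 0 δ le_rfl hδ.le
    have hνt : ν ≤ ν * (1 / δ) * t := by
      rw [mul_one_div, div_mul_eq_mul_div, le_div_iff₀ hδ]
      exact mul_le_mul_of_nonneg_left hδt.le hν
    nlinarith [hφ_growth t ht, mul_le_mul_of_nonneg_right hm ht]

section Modulus

variable {E : Type*} [SeminormedAddCommGroup E] {g : ℝ → E → ℝ} {μ : ℝ} {φ : ℝ → ℝ}

lemma continuous_uncurry_of_abs_sub_le (hφ : ContinuousWithinAt φ (Set.Ici 0) 0) (hφ0 : φ 0 = 0)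
    (hg : ∀ y₁ y₂ z₁ z₂, |g y₁ z₁ - g y₂ z₂| ≤ μ * |y₁ - y₂| + φ ‖z₁ - z₂‖) :
    Continuous (Function.uncurry g) := by
  refine continuous_iff_continuousAt.2 fun p => ?_
  have hz : Tendsto (fun q : ℝ × E => ‖q.2 - p.2‖) (𝓝 p) (𝓝[Set.Ici 0] 0) :=
    tendsto_nhdsWithin_iff.2 ⟨(tendsto_norm_sub_self p.2).comp (continuous_snd.tendsto p),
      .of_forall fun _ => norm_nonneg _⟩
  have hy : Tendsto (fun q : ℝ × E => μ * |q.1 - p.1|) (𝓝 p) (𝓝 0) := by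
    simpa using ((tendsto_norm_sub_self p.1).comp (continuous_fst.tendsto p)).const_mul μ
  have hbound : Tendsto (fun q : ℝ × E => μ * |q.1 - p.1| + φ ‖q.2 - p.2‖) (𝓝 p) (𝓝 0) := by
    have hφz := hφ.tendsto.comp hz
    rw [hφ0] at hφz
    simpa using hy.add hφz
  exact tendsto_iff_dist_tendsto_zero.2
    (squeeze_zero (fun _ => dist_nonneg) (fun q => hg q.1 p.1 q.2 p.2) hbound)

lemma sub_le_add_mul_of_abs_sub_le {m c : ℝ}
    (hg : ∀ y₁ y₂ z₁ z₂, |g y₁ z₁ - g y₂ z₂| ≤ μ * |y₁ - y₂| + φ ‖z₁ - z₂‖)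
    (hμm : μ ≤ m) (hφ : ∀ t, 0 ≤ t → φ t ≤ c + m * t) (y a : ℝ) (z w : E) :
    g y z - c ≤ g a w + m * (|y - a| + ‖z - w‖) := by
  have hgy := (le_abs_self _).trans (hg y a z w)
  nlinarith [hφ _ (norm_nonneg (z - w)), mul_le_mul_of_nonneg_right hμm (abs_nonneg (y - a))]

end Modulus

section LowerApprox

variable {d : ℕ} {g : ℝ → EuclideanSpace ℝ (Fin d) → ℝ} {m : ℝ}

lemma le_lowerApprox {c y : ℝ} {z : EuclideanSpace ℝ (Fin d)}
    (h : ∀ (a : ℚ) b, c ≤ g a (ratVec d b) + m * (|y - a| + ‖z - ratVec d b‖)) :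
    c ≤ lowerApprox d g m y z :=
  le_csInf ⟨_, 0, 0, rfl⟩ (by rintro _ ⟨a, b, rfl⟩; exact h a b)

lemma lowerApprox_le {y : ℝ} {z : EuclideanSpace ℝ (Fin d)}
    (hbdd : BddBelow (lowerApproxSet d g m y z)) (a : ℚ) (b : Fin d → ℚ) :
    lowerApprox d g m y z ≤ g a (ratVec d b) + m * (|y - a| + ‖z - ratVec d b‖) :=
  csInf_le hbdd ⟨a, b, rfl⟩

lemma bddBelow_lowerApproxSet {c y : ℝ} {z : EuclideanSpace ℝ (Fin d)}
    (h : ∀ (a : ℚ) b, c ≤ g a (ratVec d b) + m * (|y - a| + ‖z - ratVec d b‖)) :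
    BddBelow (lowerApproxSet d g m y z) :=
  ⟨c, by rintro _ ⟨a, b, rfl⟩; exact h a b⟩

lemma lowerApprox_le_add (hm : 0 ≤ m) {y₁ y₂ : ℝ} {z₁ z₂ : EuclideanSpace ℝ (Fin d)}
    (hbdd : BddBelow (lowerApproxSet d g m y₁ z₁)) :
    lowerApprox d g m y₁ z₁ ≤ lowerApprox d g m y₂ z₂ + m * (|y₁ - y₂| + ‖z₁ - z₂‖) := by
  rw [← sub_le_iff_le_add]
  refine le_lowerApprox fun a b => ?_
  have hy : |y₁ - a| ≤ |y₁ - y₂| + |y₂ - a| := abs_sub_le _ _ _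
  have hz : ‖z₁ - ratVec d b‖ ≤ ‖z₁ - z₂‖ + ‖z₂ - ratVec d b‖ :=
    norm_sub_le_norm_sub_add_norm_sub _ _ _
  have := lowerApprox_le hbdd a b
  nlinarith

lemma abs_lowerApprox_sub_le (hm : 0 ≤ m)
    (hbdd : ∀ y z, BddBelow (lowerApproxSet d g m y z)) (y₁ y₂ : ℝ)
    (z₁ z₂ : EuclideanSpace ℝ (Fin d)) :
    |lowerApprox d g m y₁ z₁ - lowerApprox d g m y₂ z₂| ≤ m * (|y₁ - y₂| + ‖z₁ - z₂‖) := by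
  have h₁ := lowerApprox_le_add hm (y₂ := y₂) (z₂ := z₂) (hbdd y₁ z₁)
  have h₂ := lowerApprox_le_add hm (y₂ := y₁) (z₂ := z₁) (hbdd y₂ z₂)
  rw [abs_sub_comm y₂, norm_sub_rev z₂] at h₂
  exact abs_sub_le_iff.2 ⟨by linarith, by linarith⟩

lemma lowerApprox_mono {m₂ y : ℝ} {z : EuclideanSpace ℝ (Fin d)}
    (hbdd : BddBelow (lowerApproxSet d g m y z)) (h : m ≤ m₂) :
    lowerApprox d g m y z ≤ lowerApprox d g m₂ y z :=
  le_lowerApprox fun a b => (lowerApprox_le hbdd a b).trans (by gcongr)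

lemma lowerApprox_le_self (hg : Continuous (Function.uncurry g))
    {y : ℝ} {z : EuclideanSpace ℝ (Fin d)} (hbdd : BddBelow (lowerApproxSet d g m y z)) :
    lowerApprox d g m y z ≤ g y z := by
  have hdense : DenseRange fun q : ℚ × (Fin d → ℚ) => ((q.1 : ℝ), ratVec d q.2) :=
    Rat.denseRange_cast.prodMap (denseRange_ratVec d)
  have key := hdense.induction_on (y, z)
    (p := fun p => lowerApprox d g m y z ≤ g p.1 p.2 + m * (|y - p.1| + ‖z - p.2‖))
    (isClosed_le continuous_const (by fun_prop)) fun q => lowerApprox_le hbdd q.1 q.2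
  simpa using key

end LowerApprox

theorem stmt_2_general (d : ℕ) (μ ν : ℝ) (hν : 0 < ν)
    (φ : ℝ → ℝ)
    (hφ_cont : ContinuousOn φ (Set.Ici 0))
    (hφ_mono : ∀ a b, 0 ≤ a → a ≤ b → φ a ≤ φ b)
    (hφ0 : φ 0 = 0)
    (hφ_growth : ∀ x, 0 ≤ x → φ x ≤ ν * (x + 1))
    (g : ℝ → EuclideanSpace ℝ (Fin d) → ℝ)
    (hg : ∀ (y₁ y₂ : ℝ) (z₁ z₂ : EuclideanSpace ℝ (Fin d)),
      |g y₁ z₁ - g y₂ z₂| ≤ μ * |y₁ - y₂| + φ ‖z₁ - z₂‖) :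
    (∀ m, max μ ν < m →
      -- (i) finiteness of the infimum
      (∀ (y : ℝ) (z : EuclideanSpace ℝ (Fin d)), BddBelow (lowerApproxSet d g m y z)) ∧
      -- (ii) Lipschitz continuity with constant m
      (∀ (y₁ y₂ : ℝ) (z₁ z₂ : EuclideanSpace ℝ (Fin d)),
        |lowerApprox d g m y₁ z₁ - lowerApprox d g m y₂ z₂| ≤
          m * (|y₁ - y₂| + ‖z₁ - z₂‖)) ∧
      -- (iii) g̲_m ≤ g
      (∀ (y : ℝ) (z : EuclideanSpace ℝ (Fin d)), lowerApprox d g m y z ≤ g y z)) ∧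
    -- (iv) monotonicity in m
    (∀ m₁ m₂, max μ ν < m₁ → m₁ ≤ m₂ →
      ∀ (y : ℝ) (z : EuclideanSpace ℝ (Fin d)),
        lowerApprox d g m₁ y z ≤ lowerApprox d g m₂ y z) ∧
    -- (v) pointwise convergence as m → ∞
    (∀ (y : ℝ) (z : EuclideanSpace ℝ (Fin d)),
      Filter.Tendsto (fun m => lowerApprox d g m y z) Filter.atTop (nhds (g y z))) := by
  have hφ_cont0 : ContinuousWithinAt φ (Set.Ici 0) 0 := hφ_cont 0 Set.self_mem_Ici
  have hgc := continuous_uncurry_of_abs_sub_le hφ_cont0 hφ0 hg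
  have hbdd : ∀ m, max μ ν ≤ m → ∀ y z, BddBelow (lowerApproxSet d g m y z) :=
    fun m hm y z => bddBelow_lowerApproxSet fun a b =>
      sub_le_add_mul_of_abs_sub_le hg (le_of_max_le_left hm)
        (fun t ht => by nlinarith [hφ_growth t ht, le_of_max_le_right hm]) y a z (ratVec d b)
  refine ⟨fun m hm => ⟨hbdd m hm.le, ?_, fun y z => lowerApprox_le_self hgc (hbdd m hm.le y z)⟩,
    fun m₁ m₂ hm₁ h y z => lowerApprox_mono (hbdd m₁ hm₁.le y z) h, fun y z => ?_⟩
  · exact abs_lowerApprox_sub_le ((hν.trans_le (le_max_right μ ν)).trans hm).le (hbdd m hm.le)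
  refine tendsto_order.2 ⟨fun l hl => ?_, fun u hu => ?_⟩
  · obtain ⟨δ, hδ, hφδ⟩ := exists_pos_lt_of_continuousWithinAt hφ_cont0 hφ0 (sub_pos.2 hl)
    filter_upwards [eventually_ge_atTop μ, eventually_ge_atTop (ν * (1 + 1 / δ))] with m hmμ hm
    calc l < g y z - φ δ := by linarith
      _ ≤ lowerApprox d g m y z := le_lowerApprox fun a b =>
        sub_le_add_mul_of_abs_sub_le hg hmμ
          (fun t => le_add_mul_of_le_mul_add_one hν.le hδ hφ_mono hφ0 hφ_growth hm) y a z _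
  · filter_upwards [eventually_ge_atTop (max μ ν)] with m hm
    exact (lowerApprox_le_self hgc (hbdd m hm y z)).trans_lt hu

/-- Properties of the lower approximation `g̲_m`:
finiteness, `m`-Lipschitz continuity, `g̲_m ≤ g`, monotonicity in `m`, and pointwise
convergence `g̲_m → g` as `m → ∞`. -/
theorem stmt_2 (d : ℕ) (hd : 1 ≤ d) (μ ν : ℝ) (hμ : 0 < μ) (hν : 0 < ν)
    (φ : ℝ → ℝ)
    (hφ_cont : ContinuousOn φ (Set.Ici 0))
    (hφ_nonneg : ∀ x, 0 ≤ x → 0 ≤ φ x)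
    (hφ_mono : ∀ a b, 0 ≤ a → a ≤ b → φ a ≤ φ b)
    (hφ_subadd : ∀ a b, 0 ≤ a → 0 ≤ b → φ (a + b) ≤ φ a + φ b)
    (hφ0 : φ 0 = 0)
    (hφ_growth : ∀ x, 0 ≤ x → φ x ≤ ν * (x + 1))
    (g : ℝ → EuclideanSpace ℝ (Fin d) → ℝ)
    (hg : ∀ (y₁ y₂ : ℝ) (z₁ z₂ : EuclideanSpace ℝ (Fin d)),
      |g y₁ z₁ - g y₂ z₂| ≤ μ * |y₁ - y₂| + φ ‖z₁ - z₂‖) :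
    (∀ m, max μ ν < m →
      -- (i) finiteness of the infimum
      (∀ (y : ℝ) (z : EuclideanSpace ℝ (Fin d)), BddBelow (lowerApproxSet d g m y z)) ∧
      -- (ii) Lipschitz continuity with constant m
      (∀ (y₁ y₂ : ℝ) (z₁ z₂ : EuclideanSpace ℝ (Fin d)),
        |lowerApprox d g m y₁ z₁ - lowerApprox d g m y₂ z₂| ≤
          m * (|y₁ - y₂| + ‖z₁ - z₂‖)) ∧
      -- (iii) g̲_m ≤ g
      (∀ (y : ℝ) (z : EuclideanSpace ℝ (Fin d)), lowerApprox d g m y z ≤ g y z)) ∧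
    -- (iv) monotonicity in m
    (∀ m₁ m₂, max μ ν < m₁ → m₁ ≤ m₂ →
      ∀ (y : ℝ) (z : EuclideanSpace ℝ (Fin d)),
        lowerApprox d g m₁ y z ≤ lowerApprox d g m₂ y z) ∧
    -- (v) pointwise convergence as m → ∞
    (∀ (y : ℝ) (z : EuclideanSpace ℝ (Fin d)),
      Filter.Tendsto (fun m => lowerApprox d g m y z) Filter.atTop (nhds (g y z))) :=
  stmt_2_general d μ ν hν φ hφ_cont hφ_mono hφ0 hφ_growth g hg
end

section
/- Let T > 0 and let f : [0, T] → ℝ^d be continuous. For u ∈ [0, T) define τ_u := min( inf{ s ∈ [u, T] : ‖f(s) − f(u)‖ ≥ 1 }, T ), with the convention inf ∅ = +∞. Let s ∈ [0, T) and let (t_n)_{n≥1} be a sequence with t_n ∈ [0, s] for all n and t_n → s as n → ∞. Then liminf_{n→∞} τ_{t_n} ≥ τ_s > s. -/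
/-- The exit time `τ_u = min( inf{ s ∈ [u,T] : ‖f s − f u‖ ≥ 1 }, T )` (with the
convention `inf ∅ = +∞`) of the path `f` from the closed unit ball centered at `f u`,
capped at `T`.  Since every element of the set `{ s ∈ [u,T] : ‖f s − f u‖ ≥ 1 }` is `≤ T`,
this equals `sInf` of that set with `T` adjoined, which avoids the junk value
`sInf ∅ = 0` of the real infimum. -/
noncomputable def exitTime (d : ℕ) (f : ℝ → EuclideanSpace ℝ (Fin d)) (T u : ℝ) : ℝ :=
  sInf ({s ∈ Set.Icc u T | 1 ≤ ‖f s - f u‖} ∪ {T})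

lemma exitTime_bddBelow (d : ℕ) (f : ℝ → EuclideanSpace ℝ (Fin d)) (T u : ℝ) (h : u ≤ T) :
    BddBelow ({s ∈ Set.Icc u T | 1 ≤ ‖f s - f u‖} ∪ {T}) := by
  refine ⟨u, ?_⟩
  rintro x (⟨⟨h1, _⟩, _⟩ | rfl)
  · exact h1
  · exact h

lemma exitTime_le_T (d : ℕ) (f : ℝ → EuclideanSpace ℝ (Fin d)) (T u : ℝ) (h : u ≤ T) :
    exitTime d f T u ≤ T :=
  csInf_le (exitTime_bddBelow d f T u h) (Set.mem_union_right _ rfl)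

lemma le_exitTime (d : ℕ) (f : ℝ → EuclideanSpace ℝ (Fin d)) (T u c : ℝ)
    (hcT : c ≤ T) (h : ∀ r ∈ Set.Icc u c, ‖f r - f u‖ < 1) :
    c ≤ exitTime d f T u := by
  refine le_csInf ⟨T, Set.mem_union_right _ rfl⟩ ?_
  rintro x (⟨⟨h1, h2⟩, h3⟩ | rfl)
  · by_contra hx
    push_neg at hx
    exact absurd h3 (not_le.mpr (h x ⟨h1, hx.le⟩))
  · exact hcT
-- append to work
lemma lt_exitTime_of_lt (d : ℕ) (f : ℝ → EuclideanSpace ℝ (Fin d)) (T : ℝ)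
    (hf : ContinuousOn f (Set.Icc 0 T)) (u : ℝ) (hu : 0 ≤ u) (huT : u < T) :
    u < exitTime d f T u := by
  have hcw : ContinuousWithinAt f (Set.Icc 0 T) u := hf u ⟨hu, huT.le⟩
  rw [Metric.continuousWithinAt_iff] at hcw
  obtain ⟨δ, hδ, hδ'⟩ := hcw 1 one_pos
  set c := min (u + δ / 2) T with hc
  have hcT : c ≤ T := min_le_right _ _
  have huc : u < c := lt_min (by linarith) huT
  have key : ∀ r ∈ Set.Icc u c, ‖f r - f u‖ < 1 := by
    intro r ⟨hr1, hr2⟩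
    have hrT : r ≤ T := hr2.trans hcT
    have : dist r u < δ := by
      rw [Real.dist_eq, abs_of_nonneg (by linarith)]
      have := hr2.trans (min_le_left _ _)
      linarith
    have := hδ' ⟨hu.trans hr1, hrT⟩ this
    rwa [dist_eq_norm] at this
  exact lt_of_lt_of_le huc (le_exitTime d f T u c hcT key)

/-- For a continuous path `f : [0,T] → ℝ^d`, `s ∈ [0,T)` and a sequence
`t_n ∈ [0,s]` with `t_n → s`, one has `liminf_n τ_{t_n} ≥ τ_s > s`. -/
theorem stmt_6 (d : ℕ) (hd : 1 ≤ d) (T : ℝ) (hT : 0 < T)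
    (f : ℝ → EuclideanSpace ℝ (Fin d)) (hf : ContinuousOn f (Set.Icc 0 T))
    (s : ℝ) (hs : 0 ≤ s) (hsT : s < T)
    (t : ℕ → ℝ) (ht : ∀ n, t n ∈ Set.Icc 0 s)
    (htlim : Filter.Tendsto t Filter.atTop (nhds s)) :
    exitTime d f T s ≤ Filter.liminf (fun n => exitTime d f T (t n)) Filter.atTop ∧
    s < exitTime d f T s := by
  have hsL : s < exitTime d f T s := lt_exitTime_of_lt d f T hf s hs hsT
  set L := exitTime d f T s with hL
  have hLT : L ≤ T := exitTime_le_T d f T s hsT.le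
  refine ⟨?_, hsL⟩
  -- coboundedness of the sequence of exit times
  have hbdd : Filter.IsBoundedUnder (· ≤ ·) Filter.atTop
      (fun n => exitTime d f T (t n)) :=
    Filter.isBoundedUnder_of ⟨T, fun n => exitTime_le_T d f T (t n)
      ((ht n).2.trans hsT.le)⟩
  have hcobdd : Filter.IsCoboundedUnder (· ≥ ·) Filter.atTop
      (fun n => exitTime d f T (t n)) := hbdd.isCoboundedUnder_ge
  -- main step: for any c with s ≤ c < L, eventually c ≤ τ_{t n}
  have main : ∀ c, s ≤ c → c < L → ∀ᶠ n in Filter.atTop, c ≤ exitTime d f T (t n) := by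
    intro c hsc hcL
    have hcT : c ≤ T := hcL.le.trans hLT
    -- no exit on [s, c]
    have hno : ∀ r ∈ Set.Icc s c, ‖f r - f s‖ < 1 := by
      intro r ⟨hr1, hr2⟩
      by_contra h
      push_neg at h
      have : L ≤ r := csInf_le (exitTime_bddBelow d f T s hsT.le)
        (Set.mem_union_left _ ⟨⟨hr1, hr2.trans hcT⟩, h⟩)
      linarith
    -- the sup M of ‖f r - f s‖ on [s,c] is < 1
    have hcont : ContinuousOn (fun r => ‖f r - f s‖) (Set.Icc s c) := by
      have hsub : Set.Icc s c ⊆ Set.Icc 0 T := Set.Icc_subset_Icc hs hcT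
      exact ((hf.mono hsub).sub continuousOn_const).norm
    obtain ⟨r₀, hr₀, hmax'⟩ := (isCompact_Icc).exists_isMaxOn
      (Set.nonempty_Icc.mpr hsc) hcont
    have hmax : ∀ r ∈ Set.Icc s c, ‖f r - f s‖ ≤ ‖f r₀ - f s‖ := fun r hr => hmax' hr
    set M := ‖f r₀ - f s‖ with hM
    have hM1 : M < 1 := hno r₀ hr₀
    have hM0 : 0 ≤ M := norm_nonneg _
    set ε := (1 - M) / 3 with hε
    have hεpos : 0 < ε := by rw [hε]; linarith
    -- continuity at s: choose δ
    have hcw : ContinuousWithinAt f (Set.Icc 0 T) s := hf s ⟨hs, hsT.le⟩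
    rw [Metric.continuousWithinAt_iff] at hcw
    obtain ⟨δ, hδ, hδ'⟩ := hcw ε hεpos
    -- eventually t n > s - δ
    have hev : ∀ᶠ n in Filter.atTop, s - δ < t n :=
      htlim (Ioi_mem_nhds (by linarith))
    filter_upwards [hev] with n hn
    obtain ⟨htn0, htns⟩ := ht n
    have htnT : t n ≤ T := htns.trans hsT.le
    -- f (t n) is ε-close to f s
    have hclose : ∀ r, t n ≤ r → r ≤ s → ‖f r - f s‖ < ε := by
      intro r h1 h2
      have : dist r s < δ := by
        rw [Real.dist_eq, abs_of_nonpos (by linarith)]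
        linarith
      have := hδ' ⟨htn0.trans h1, h2.trans hsT.le⟩ this
      rwa [dist_eq_norm] at this
    have htnclose : ‖f (t n) - f s‖ < ε := hclose (t n) le_rfl htns
    refine le_exitTime d f T (t n) c hcT ?_
    intro r ⟨hr1, hr2⟩
    rcases le_or_gt r s with hrs | hrs
    · have h1 : ‖f r - f s‖ < ε := hclose r hr1 hrs
      calc ‖f r - f (t n)‖ ≤ ‖f r - f s‖ + ‖f s - f (t n)‖ := norm_sub_le_norm_sub_add_norm_sub _ _ _
        _ < ε + ε := by rw [norm_sub_rev (f s)]; linarith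
        _ < 1 := by rw [hε]; linarith
    · have h1 : ‖f r - f s‖ ≤ M := hmax r ⟨hrs.le, hr2⟩
      calc ‖f r - f (t n)‖ ≤ ‖f r - f s‖ + ‖f s - f (t n)‖ := norm_sub_le_norm_sub_add_norm_sub _ _ _
        _ < M + ε := by rw [norm_sub_rev (f s)]; linarith
        _ < 1 := by rw [hε]; linarith
  -- conclude: L ≤ liminf
  refine le_of_forall_lt fun c hcL => ?_
  have hb : max c s < L := max_lt hcL hsL
  set b := (max c s + L) / 2 with hbdef
  have h1 : max c s < b := by rw [hbdef]; linarith
  have h2 : b < L := by rw [hbdef]; linarith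
  have hsb : s ≤ b := le_trans (le_max_right c s) h1.le
  have : b ≤ Filter.liminf (fun n => exitTime d f T (t n)) Filter.atTop :=
    Filter.le_liminf_of_le hcobdd (main b hsb h2)
  exact lt_of_lt_of_le (lt_of_le_of_lt (le_max_left c s) h1) this
end

section
/- Let (Ω, F, P) be a probability space with a filtration (F_t)_{t ∈ [0,T]}, and let (𝓔_{s,t})_{0 ≤ s ≤ t ≤ T} be a family of operators 𝓔_{s,t} : L²(Ω, F_t, P) → L²(Ω, F_s, P) satisfying monotonicity, 𝓔_{t,t}[ξ] = ξ a.s., and consistency. Then the following two conditions are equivalent: (a) for all 0 ≤ s ≤ t ≤ T, all ξ ∈ L²(Ω, F_t, P) and all A ∈ F_s one has 1_A 𝓔_{s,t}[ξ] = 1_A 𝓔_{s,t}[1_A ξ] a.s., and moreover 𝓔_{s,t}[0] = 0 a.s.; (b) for all 0 ≤ s ≤ t ≤ T, all ξ ∈ L²(Ω, F_t, P) and all A ∈ F_s one has 1_A 𝓔_{s,t}[ξ] = 𝓔_{s,t}[1_A ξ] a.s. -/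
open MeasureTheory

/-- A family of operators `𝓔_{s,t} : L²(F_t) → L²(F_s)` on `[0, T]` satisfying
monotonicity, `𝓔_{t,t}[ξ] = ξ` and time consistency (axioms (i)–(iii) of
Definition 3.1 of the paper, without the zero-one law). -/
structure PreEvaluation {Ω : Type*} [m0 : MeasurableSpace Ω] (P : Measure Ω) (T : ℝ)
    (F : Filtration ℝ m0) where
  eval : ℝ → ℝ → (Ω → ℝ) → Ω → ℝ
  measurable_eval : ∀ s t ξ, 0 ≤ s → s ≤ t → t ≤ T →
    AEStronglyMeasurable[F t] ξ P → MemLp ξ 2 P →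
    AEStronglyMeasurable[F s] (eval s t ξ) P
  memL2_eval : ∀ s t ξ, 0 ≤ s → s ≤ t → t ≤ T →
    AEStronglyMeasurable[F t] ξ P → MemLp ξ 2 P → MemLp (eval s t ξ) 2 P
  mono : ∀ s t ξ η, 0 ≤ s → s ≤ t → t ≤ T →
    AEStronglyMeasurable[F t] ξ P → MemLp ξ 2 P →
    AEStronglyMeasurable[F t] η P → MemLp η 2 P →
    (∀ᵐ ω ∂P, η ω ≤ ξ ω) → ∀ᵐ ω ∂P, eval s t η ω ≤ eval s t ξ ω
  eval_self : ∀ t ξ, 0 ≤ t → t ≤ T →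
    AEStronglyMeasurable[F t] ξ P → MemLp ξ 2 P → eval t t ξ =ᵐ[P] ξ
  consistent : ∀ r s t ξ, 0 ≤ r → r ≤ s → s ≤ t → t ≤ T →
    AEStronglyMeasurable[F t] ξ P → MemLp ξ 2 P →
    eval r s (eval s t ξ) =ᵐ[P] eval r t ξ

/-! On `A`, the zero-one law already gives the strong one; on `Aᶜ`, the zero-one law applied to
`1_A ξ` gives `1_{Aᶜ} 𝓔[1_A ξ] = 1_{Aᶜ} 𝓔[0]`, which vanishes by normalization. Conversely, the
strong law applied to `1_A ξ` yields the zero-one law, and applied with `A = ∅` normalization. -/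

theorem MeasureTheory.AEStronglyMeasurable.indicator' {Ω β : Type*} [TopologicalSpace β] [Zero β]
    {m m0 : MeasurableSpace Ω} {μ : Measure[m0] Ω} {f : Ω → β} {A : Set Ω}
    (hf : AEStronglyMeasurable[m] f μ) (hA : MeasurableSet[m] A) :
    AEStronglyMeasurable[m] (A.indicator f) μ :=
  ⟨A.indicator (hf.mk f), hf.stronglyMeasurable_mk.indicator hA, hf.ae_eq_mk.indicator⟩

theorem indicator_ae_eq_of_indicator_compl_ae_eq_zero {Ω β : Type*} [MeasurableSpace Ω]
    [AddZeroClass β] {μ : Measure Ω} {A : Set Ω} {f g : Ω → β}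
    (h : A.indicator f =ᵐ[μ] A.indicator g) (hc : Aᶜ.indicator g =ᵐ[μ] 0) :
    A.indicator f =ᵐ[μ] g :=
  calc A.indicator f =ᵐ[μ] A.indicator g + Aᶜ.indicator g := by
        filter_upwards [h, hc] with ω hω hcω
        simp [hω, hcω]
    _ = g := Set.indicator_self_add_compl A g

namespace PreEvaluation

variable {Ω : Type*} [m0 : MeasurableSpace Ω] {P : Measure Ω} {T : ℝ} {F : Filtration ℝ m0}
  (E : PreEvaluation P T F)

def ZeroOneLaw : Prop :=
  ∀ (s t : ℝ) (ξ : Ω → ℝ) (A : Set Ω), 0 ≤ s → s ≤ t → t ≤ T →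
    AEStronglyMeasurable[F t] ξ P → MemLp ξ 2 P → MeasurableSet[F s] A →
    A.indicator (E.eval s t ξ) =ᵐ[P] A.indicator (E.eval s t (A.indicator ξ))

def Normalized : Prop :=
  ∀ (s t : ℝ), 0 ≤ s → s ≤ t → t ≤ T → E.eval s t (fun _ => (0 : ℝ)) =ᵐ[P] fun _ => (0 : ℝ)

def StrongZeroOneLaw : Prop :=
  ∀ (s t : ℝ) (ξ : Ω → ℝ) (A : Set Ω), 0 ≤ s → s ≤ t → t ≤ T →
    AEStronglyMeasurable[F t] ξ P → MemLp ξ 2 P → MeasurableSet[F s] A →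
    A.indicator (E.eval s t ξ) =ᵐ[P] E.eval s t (A.indicator ξ)

variable {E}

theorem strongZeroOneLaw_of_zeroOneLaw (h01 : E.ZeroOneLaw) (h0 : E.Normalized) :
    E.StrongZeroOneLaw := by
  intro s t ξ A hs hst htT hξm hξ2 hA
  have hAξm : AEStronglyMeasurable[F t] (A.indicator ξ) P := hξm.indicator' (F.mono hst _ hA)
  have hAξ2 : MemLp (A.indicator ξ) 2 P := hξ2.indicator (F.le s _ hA)
  have hcompl : Aᶜ.indicator (E.eval s t (A.indicator ξ)) =ᵐ[P] 0 := by
    have h := h01 s t (A.indicator ξ) Aᶜ hs hst htT hAξm hAξ2 hA.compl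
    rw [Set.indicator_indicator, Set.compl_inter_self, Set.indicator_empty] at h
    exact (h.trans (h0 s t hs hst htT).indicator).trans (Set.indicator_zero ..).eventuallyEq
  exact indicator_ae_eq_of_indicator_compl_ae_eq_zero (h01 s t ξ A hs hst htT hξm hξ2 hA) hcompl

theorem StrongZeroOneLaw.zeroOneLaw (h : E.StrongZeroOneLaw) : E.ZeroOneLaw := by
  intro s t ξ A hs hst htT hξm hξ2 hA
  have hA_twice := h s t (A.indicator ξ) A hs hst htT (hξm.indicator' (F.mono hst _ hA))
    (hξ2.indicator (F.le s _ hA)) hA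
  rw [Set.indicator_indicator, Set.inter_self] at hA_twice
  exact (h s t ξ A hs hst htT hξm hξ2 hA).trans hA_twice.symm

theorem StrongZeroOneLaw.normalized (h : E.StrongZeroOneLaw) : E.Normalized := by
  intro s t hs hst htT
  have h_empty := h s t (fun _ => 0) ∅ hs hst htT aestronglyMeasurable_const MemLp.zero
    (@MeasurableSet.empty Ω (F s))
  rw [Set.indicator_empty, Set.indicator_empty] at h_empty
  exact h_empty.symm

end PreEvaluation

theorem stmt_8_general {Ω : Type*} [m0 : MeasurableSpace Ω] (P : Measure Ω)
    (T : ℝ) (F : Filtration ℝ m0) (E : PreEvaluation P T F) :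
    ((∀ (s t : ℝ) (ξ : Ω → ℝ) (A : Set Ω), 0 ≤ s → s ≤ t → t ≤ T →
        AEStronglyMeasurable[F t] ξ P → MemLp ξ 2 P → MeasurableSet[F s] A →
        A.indicator (E.eval s t ξ) =ᵐ[P] A.indicator (E.eval s t (A.indicator ξ))) ∧
      (∀ (s t : ℝ), 0 ≤ s → s ≤ t → t ≤ T →
        E.eval s t (fun _ => (0 : ℝ)) =ᵐ[P] fun _ => (0 : ℝ)))
    ↔
    (∀ (s t : ℝ) (ξ : Ω → ℝ) (A : Set Ω), 0 ≤ s → s ≤ t → t ≤ T →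
        AEStronglyMeasurable[F t] ξ P → MemLp ξ 2 P → MeasurableSet[F s] A →
        A.indicator (E.eval s t ξ) =ᵐ[P] E.eval s t (A.indicator ξ)) :=
  show E.ZeroOneLaw ∧ E.Normalized ↔ E.StrongZeroOneLaw from
    ⟨fun h => PreEvaluation.strongZeroOneLaw_of_zeroOneLaw h.1 h.2,
      fun h => ⟨h.zeroOneLaw, h.normalized⟩⟩

/-- **Remark 3.2 of the paper.** For a family `𝓔_{s,t}` satisfying
monotonicity, `𝓔_{t,t}[ξ] = ξ` and consistency, the following are equivalent:
(a) the zero-one law `1_A 𝓔_{s,t}[ξ] = 1_A 𝓔_{s,t}[1_A ξ]` a.s. for `A ∈ F_s`, together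
with the normalization `𝓔_{s,t}[0] = 0` a.s.;
(b) the strong zero-one law `1_A 𝓔_{s,t}[ξ] = 𝓔_{s,t}[1_A ξ]` a.s. for `A ∈ F_s`. -/
theorem stmt_8 {Ω : Type*} [m0 : MeasurableSpace Ω] (P : Measure Ω) [IsProbabilityMeasure P]
    (T : ℝ) (hT : 0 < T) (F : Filtration ℝ m0) (E : PreEvaluation P T F) :
    ((∀ (s t : ℝ) (ξ : Ω → ℝ) (A : Set Ω), 0 ≤ s → s ≤ t → t ≤ T →
        AEStronglyMeasurable[F t] ξ P → MemLp ξ 2 P → MeasurableSet[F s] A →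
        A.indicator (E.eval s t ξ) =ᵐ[P] A.indicator (E.eval s t (A.indicator ξ))) ∧
      (∀ (s t : ℝ), 0 ≤ s → s ≤ t → t ≤ T →
        E.eval s t (fun _ => (0 : ℝ)) =ᵐ[P] fun _ => (0 : ℝ)))
    ↔
    (∀ (s t : ℝ) (ξ : Ω → ℝ) (A : Set Ω), 0 ≤ s → s ≤ t → t ≤ T →
        AEStronglyMeasurable[F t] ξ P → MemLp ξ 2 P → MeasurableSet[F s] A →
        A.indicator (E.eval s t ξ) =ᵐ[P] E.eval s t (A.indicator ξ)) :=
  stmt_8_general (m0 := m0) P T F E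
end
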